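/- Let B, S, C be entrywise nonnegative and σ > 0, δ > 0. Then U_C(C; δ) = C if and only if C satisfies the C-part KKT conditions, i.e., for every (q,n): (∇_C J)_{qn} ≥ 0 and (∇_C J)_{qn}·c_{qn} = 0. -/
import Mathlib


open Matrix Classical Filter

noncomputable section

/-- Squared Frobenius norm. -/
def frobSq {m n : ℕ} (X : Matrix (Fin m) (Fin n) ℝ) : ℝ := ∑ i, ∑ j, (X i j) ^ 2

/-- The BNMtF objective J(B,S,C). -/
def objJ {M N P : ℕ} (A : Matrix (Fin M) (Fin N) ℝ) (α β : ℝ)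
    (B : Matrix (Fin M) (Fin P) ℝ) (S : Matrix (Fin P) (Fin P) ℝ) (C : Matrix (Fin P) (Fin N) ℝ) : ℝ :=
  (1 / 2) * frobSq (A - B * S * C) + (α / 2) * frobSq (C * Cᵀ - 1) +
    (β / 2) * frobSq (Bᵀ * B - 1)

/-- ∇_B J. -/
def gradB {M N P : ℕ} (A : Matrix (Fin M) (Fin N) ℝ) (β : ℝ)
    (B : Matrix (Fin M) (Fin P) ℝ) (S : Matrix (Fin P) (Fin P) ℝ) (C : Matrix (Fin P) (Fin N) ℝ) : Matrix (Fin M) (Fin P) ℝ :=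
  B * S * C * Cᵀ * Sᵀ - A * Cᵀ * Sᵀ + β • (B * Bᵀ * B) - β • B

/-- ∇_C J. -/
def gradC {M N P : ℕ} (A : Matrix (Fin M) (Fin N) ℝ) (α : ℝ)
    (B : Matrix (Fin M) (Fin P) ℝ) (S : Matrix (Fin P) (Fin P) ℝ) (C : Matrix (Fin P) (Fin N) ℝ) : Matrix (Fin P) (Fin N) ℝ :=
  Sᵀ * Bᵀ * B * S * C - Sᵀ * Bᵀ * A + α • (C * Cᵀ * C) - α • C

/-- ∇_S J. -/
def gradS {M N P : ℕ} (A : Matrix (Fin M) (Fin N) ℝ)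
    (B : Matrix (Fin M) (Fin P) ℝ) (S : Matrix (Fin P) (Fin P) ℝ) (C : Matrix (Fin P) (Fin N) ℝ) : Matrix (Fin P) (Fin P) ℝ :=
  Bᵀ * B * S * C * Cᵀ - Bᵀ * A * Cᵀ

/-- B-part KKT conditions. -/
def KKTB {M N P : ℕ} (A : Matrix (Fin M) (Fin N) ℝ) (β : ℝ)
    (B : Matrix (Fin M) (Fin P) ℝ) (S : Matrix (Fin P) (Fin P) ℝ) (C : Matrix (Fin P) (Fin N) ℝ) : Prop :=
  ∀ m p, 0 ≤ gradB A β B S C m p ∧ gradB A β B S C m p * B m p = 0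

/-- C-part KKT conditions. -/
def KKTC {M N P : ℕ} (A : Matrix (Fin M) (Fin N) ℝ) (α : ℝ)
    (B : Matrix (Fin M) (Fin P) ℝ) (S : Matrix (Fin P) (Fin P) ℝ) (C : Matrix (Fin P) (Fin N) ℝ) : Prop :=
  ∀ q n, 0 ≤ gradC A α B S C q n ∧ gradC A α B S C q n * C q n = 0

/-- S-part KKT conditions. -/
def KKTS {M N P : ℕ} (A : Matrix (Fin M) (Fin N) ℝ)
    (B : Matrix (Fin M) (Fin P) ℝ) (S : Matrix (Fin P) (Fin P) ℝ) (C : Matrix (Fin P) (Fin N) ℝ) : Prop :=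
  ∀ p q, 0 ≤ gradS A B S C p q ∧ gradS A B S C p q * S p q = 0

/-- Full KKT conditions. -/
def KKT {M N P : ℕ} (A : Matrix (Fin M) (Fin N) ℝ) (α β : ℝ)
    (B : Matrix (Fin M) (Fin P) ℝ) (S : Matrix (Fin P) (Fin P) ℝ) (C : Matrix (Fin P) (Fin N) ℝ) : Prop :=
  KKTB A β B S C ∧ KKTS A B S C ∧ KKTC A α B S C

/-- B̄. -/
def Bbar {M N P : ℕ} (A : Matrix (Fin M) (Fin N) ℝ) (β σ : ℝ)
    (B : Matrix (Fin M) (Fin P) ℝ) (S : Matrix (Fin P) (Fin P) ℝ) (C : Matrix (Fin P) (Fin N) ℝ) : Matrix (Fin M) (Fin P) ℝ :=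
  Matrix.of fun m p => if 0 ≤ gradB A β B S C m p then B m p else max (B m p) σ

/-- Denominator matrix of the additive B-update. -/
def denomB {M N P : ℕ} (A : Matrix (Fin M) (Fin N) ℝ) (β σ : ℝ)
    (B : Matrix (Fin M) (Fin P) ℝ) (S : Matrix (Fin P) (Fin P) ℝ) (C : Matrix (Fin P) (Fin N) ℝ) : Matrix (Fin M) (Fin P) ℝ :=
  Bbar A β σ B S C * S * C * Cᵀ * Sᵀ +
    β • (Bbar A β σ B S C * (Bbar A β σ B S C)ᵀ * Bbar A β σ B S C)

/-- Additive B-update U_B(B; δ). -/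
def UB {M N P : ℕ} (A : Matrix (Fin M) (Fin N) ℝ) (β σ : ℝ)
    (B : Matrix (Fin M) (Fin P) ℝ) (S : Matrix (Fin P) (Fin P) ℝ) (C : Matrix (Fin P) (Fin N) ℝ) (δ : ℝ) : Matrix (Fin M) (Fin P) ℝ :=
  Matrix.of fun m p =>
    B m p - Bbar A β σ B S C m p * gradB A β B S C m p / (denomB A β σ B S C m p + δ)

/-- I_m : set of non-KKT indices in row m of B. -/
def IsetB {M N P : ℕ} (A : Matrix (Fin M) (Fin N) ℝ) (β : ℝ)
    (B : Matrix (Fin M) (Fin P) ℝ) (S : Matrix (Fin P) (Fin P) ℝ) (C : Matrix (Fin P) (Fin N) ℝ) (m : Fin M) : Set (Fin P) :=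
  {p | (0 < B m p ∧ gradB A β B S C m p ≠ 0) ∨ (B m p = 0 ∧ gradB A β B S C m p < 0)}

/-- Diagonal entries d^m_{pp}(δ). -/
def dB {M N P : ℕ} (A : Matrix (Fin M) (Fin N) ℝ) (β σ : ℝ)
    (B : Matrix (Fin M) (Fin P) ℝ) (S : Matrix (Fin P) (Fin P) ℝ) (C : Matrix (Fin P) (Fin N) ℝ) (δ : ℝ) (m : Fin M) (p : Fin P) : ℝ :=
  if p ∈ IsetB A β B S C m then (denomB A β σ B S C m p + δ) / Bbar A β σ B S C m p else 0

/-- Auxiliary function G_B(B′, B; δ). -/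
def GB {M N P : ℕ} (A : Matrix (Fin M) (Fin N) ℝ) (α β σ : ℝ)
    (B : Matrix (Fin M) (Fin P) ℝ) (S : Matrix (Fin P) (Fin P) ℝ) (C : Matrix (Fin P) (Fin N) ℝ) (B' : Matrix (Fin M) (Fin P) ℝ) (δ : ℝ) : ℝ :=
  objJ A α β B S C + (∑ m, ∑ p, (B' m p - B m p) * gradB A β B S C m p) +
    (1 / 2) * ∑ m, ∑ p, dB A β σ B S C δ m p * (B' m p - B m p) ^ 2

/-- C̄. -/
def Cbar {M N P : ℕ} (A : Matrix (Fin M) (Fin N) ℝ) (α σ : ℝ)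
    (B : Matrix (Fin M) (Fin P) ℝ) (S : Matrix (Fin P) (Fin P) ℝ) (C : Matrix (Fin P) (Fin N) ℝ) : Matrix (Fin P) (Fin N) ℝ :=
  Matrix.of fun q n => if 0 ≤ gradC A α B S C q n then C q n else max (C q n) σ

/-- Denominator matrix of the additive C-update. -/
def denomC {M N P : ℕ} (A : Matrix (Fin M) (Fin N) ℝ) (α σ : ℝ)
    (B : Matrix (Fin M) (Fin P) ℝ) (S : Matrix (Fin P) (Fin P) ℝ) (C : Matrix (Fin P) (Fin N) ℝ) : Matrix (Fin P) (Fin N) ℝ :=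
  Sᵀ * Bᵀ * B * S * Cbar A α σ B S C +
    α • (Cbar A α σ B S C * (Cbar A α σ B S C)ᵀ * Cbar A α σ B S C)

/-- Additive C-update U_C(C; δ). -/
def UC {M N P : ℕ} (A : Matrix (Fin M) (Fin N) ℝ) (α σ : ℝ)
    (B : Matrix (Fin M) (Fin P) ℝ) (S : Matrix (Fin P) (Fin P) ℝ) (C : Matrix (Fin P) (Fin N) ℝ) (δ : ℝ) : Matrix (Fin P) (Fin N) ℝ :=
  Matrix.of fun q n =>
    C q n - Cbar A α σ B S C q n * gradC A α B S C q n / (denomC A α σ B S C q n + δ)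

/-- S̄. -/
def Sbar {M N P : ℕ} (A : Matrix (Fin M) (Fin N) ℝ) (σ : ℝ)
    (B : Matrix (Fin M) (Fin P) ℝ) (S : Matrix (Fin P) (Fin P) ℝ) (C : Matrix (Fin P) (Fin N) ℝ) : Matrix (Fin P) (Fin P) ℝ :=
  Matrix.of fun p q => if 0 ≤ gradS A B S C p q then S p q else max (S p q) σ

/-- Denominator matrix of the additive S-update. -/
def denomS {M N P : ℕ} (A : Matrix (Fin M) (Fin N) ℝ) (σ : ℝ)
    (B : Matrix (Fin M) (Fin P) ℝ) (S : Matrix (Fin P) (Fin P) ℝ) (C : Matrix (Fin P) (Fin N) ℝ) : Matrix (Fin P) (Fin P) ℝ :=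
  Bᵀ * B * Sbar A σ B S C * C * Cᵀ

/-- Additive S-update U_S(S; δ). -/
def US {M N P : ℕ} (A : Matrix (Fin M) (Fin N) ℝ) (σ : ℝ)
    (B : Matrix (Fin M) (Fin P) ℝ) (S : Matrix (Fin P) (Fin P) ℝ) (C : Matrix (Fin P) (Fin N) ℝ) (δ : ℝ) : Matrix (Fin P) (Fin P) ℝ :=
  Matrix.of fun p q =>
    S p q - Sbar A σ B S C p q * gradS A B S C p q / (denomS A σ B S C p q + δ)

/-- I_q : set of non-KKT indices in column q of S. -/
def IsetS {M N P : ℕ} (A : Matrix (Fin M) (Fin N) ℝ)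
    (B : Matrix (Fin M) (Fin P) ℝ) (S : Matrix (Fin P) (Fin P) ℝ) (C : Matrix (Fin P) (Fin N) ℝ) (q : Fin P) : Set (Fin P) :=
  {p | (0 < S p q ∧ gradS A B S C p q ≠ 0) ∨ (S p q = 0 ∧ gradS A B S C p q < 0)}

/-- Diagonal entries d^q_{pp}(δ). -/
def dS {M N P : ℕ} (A : Matrix (Fin M) (Fin N) ℝ) (σ : ℝ)
    (B : Matrix (Fin M) (Fin P) ℝ) (S : Matrix (Fin P) (Fin P) ℝ) (C : Matrix (Fin P) (Fin N) ℝ) (δ : ℝ) (p q : Fin P) : ℝ :=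
  if p ∈ IsetS A B S C q then (denomS A σ B S C p q + δ) / Sbar A σ B S C p q else 0

/-- Auxiliary function G_S(S′, S; δ). -/
def GS {M N P : ℕ} (A : Matrix (Fin M) (Fin N) ℝ) (α β σ : ℝ)
    (B : Matrix (Fin M) (Fin P) ℝ) (S : Matrix (Fin P) (Fin P) ℝ) (C : Matrix (Fin P) (Fin N) ℝ) (S' : Matrix (Fin P) (Fin P) ℝ) (δ : ℝ) : ℝ :=
  objJ A α β B S C + (∑ p, ∑ q, (S' p q - S p q) * gradS A B S C p q) +
    (1 / 2) * ∑ q, ∑ p, dS A σ B S C δ p q * (S' p q - S p q) ^ 2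


lemma mulNonneg {a b c : ℕ} {X : Matrix (Fin a) (Fin b) ℝ} {Y : Matrix (Fin b) (Fin c) ℝ}
    (hX : ∀ i j, 0 ≤ X i j) (hY : ∀ i j, 0 ≤ Y i j) : ∀ i j, 0 ≤ (X * Y) i j := by
  intro i j
  rw [Matrix.mul_apply]
  exact Finset.sum_nonneg fun k _ => mul_nonneg (hX i k) (hY k j)

theorem stmt_14 {M N P : ℕ} (A : Matrix (Fin M) (Fin N) ℝ) (hA : ∀ i j, 0 ≤ A i j)
    (α β σ : ℝ) (hα : 0 < α) (hβ : 0 < β) (hσ : 0 < σ)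
    (B : Matrix (Fin M) (Fin P) ℝ) (S : Matrix (Fin P) (Fin P) ℝ) (C : Matrix (Fin P) (Fin N) ℝ)
    (hB : ∀ m p, 0 ≤ B m p) (hS : ∀ p q, 0 ≤ S p q) (hC : ∀ q n, 0 ≤ C q n)
    (δ : ℝ) (hδ : 0 < δ) :
    UC A α σ B S C δ = C ↔
      ∀ q n, 0 ≤ gradC A α B S C q n ∧ gradC A α B S C q n * C q n = 0 := by
  have hCbar : ∀ q n, 0 ≤ Cbar A α σ B S C q n := by
    intro q n
    unfold Cbar
    simp only [Matrix.of_apply]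
    split
    · exact hC q n
    · exact le_max_of_le_right hσ.le
  have hBt : ∀ i j, 0 ≤ Bᵀ i j := fun i j => hB j i
  have hSt : ∀ i j, 0 ≤ Sᵀ i j := fun i j => hS j i
  have hCbt : ∀ i j, 0 ≤ (Cbar A α σ B S C)ᵀ i j := fun i j => hCbar j i
  have hden : ∀ q n, 0 < denomC A α σ B S C q n + δ := by
    intro q n
    have h1 : 0 ≤ (Sᵀ * Bᵀ * B * S * Cbar A α σ B S C) q n :=
      mulNonneg (mulNonneg (mulNonneg (mulNonneg hSt hBt) hB) hS) hCbar q n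
    have h2 : 0 ≤ (Cbar A α σ B S C * (Cbar A α σ B S C)ᵀ * Cbar A α σ B S C) q n :=
      mulNonneg (mulNonneg hCbar hCbt) hCbar q n
    have : 0 ≤ denomC A α σ B S C q n := by
      unfold denomC
      simp only [Matrix.add_apply, Matrix.smul_apply, smul_eq_mul]
      positivity
    linarith
  constructor
  · intro h q n
    have hqn := congrFun (congrFun h q) n
    unfold UC at hqn
    simp only [Matrix.of_apply] at hqn
    have hz : Cbar A α σ B S C q n * gradC A α B S C q n = 0 := by
      have hd := (hden q n).ne'
      have : Cbar A α σ B S C q n * gradC A α B S C q n / (denomC A α σ B S C q n + δ) = 0 := by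
        linarith
      rcases div_eq_zero_iff.mp this with h0 | h0
      · exact h0
      · exact absurd h0 hd
    have hge : 0 ≤ gradC A α B S C q n := by
      by_contra hneg
      push_neg at hneg
      have hCb : Cbar A α σ B S C q n = max (C q n) σ := by
        unfold Cbar
        simp only [Matrix.of_apply]
        rw [if_neg (not_le.mpr hneg)]
      have hpos : 0 < Cbar A α σ B S C q n := by
        rw [hCb]; exact lt_max_of_lt_right hσ
      have := mul_eq_zero.mp hz
      rcases this with h0 | h0
      · exact hpos.ne' h0
      · exact hneg.ne h0
    refine ⟨hge, ?_⟩
    have hCb : Cbar A α σ B S C q n = C q n := by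
      unfold Cbar
      simp only [Matrix.of_apply]
      rw [if_pos hge]
    rw [hCb] at hz
    linarith [hz, mul_comm (C q n) (gradC A α B S C q n)]
  · intro h
    funext q n
    unfold UC
    simp only [Matrix.of_apply]
    obtain ⟨hge, hz⟩ := h q n
    have hCb : Cbar A α σ B S C q n = C q n := by
      unfold Cbar
      simp only [Matrix.of_apply]
      rw [if_pos hge]
    rw [hCb, mul_comm, hz, zero_div, sub_zero]
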